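/- arXiv:1603.00613 — 7 statements merged into one kernel-verified Lean document; each statement's English description precedes it below -/
import Mathlib

section
/- If X is a real random variable with a ≤ X ≤ b almost surely, then 1 ≤ E[e^{X - E[X]}] ≤ e^{(b-a)²/8}. -/
open MeasureTheory ProbabilityTheory

section

variable {Ω : Type*} [MeasurableSpace Ω] {μ : Measure Ω} {X : Ω → ℝ}

lemma one_le_integral_exp_sub_integral [IsProbabilityMeasure μ] (hX : Integrable X μ)
    (hexp : Integrable (fun ω ↦ Real.exp (X ω - μ[X])) μ) :
    1 ≤ ∫ ω, Real.exp (X ω - μ[X]) ∂μ := by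
  have hcentered : ∫ ω, (X ω - μ[X]) ∂μ = 0 := by
    simp [integral_sub hX (integrable_const _)]
  calc 1 = Real.exp (∫ ω, (X ω - μ[X]) ∂μ) := by rw [hcentered, Real.exp_zero]
    _ ≤ ∫ ω, Real.exp (X ω - μ[X]) ∂μ :=
      convexOn_exp.map_integral_le Real.continuous_exp.continuousOn isClosed_univ
        (ae_of_all _ fun _ ↦ Set.mem_univ _) (hX.sub (integrable_const _)) hexp

lemma ProbabilityTheory.HasSubgaussianMGF.integral_exp_le {c : NNReal}
    (h : HasSubgaussianMGF X c μ) : ∫ ω, Real.exp (X ω) ∂μ ≤ Real.exp (c / 2) := by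
  simpa [mgf] using h.mgf_le 1

end

theorem hoeffding_real {Ω : Type*} [MeasurableSpace Ω] (μ : Measure Ω)
    [IsProbabilityMeasure μ] (X : Ω → ℝ) (hX : Integrable X μ) (a b : ℝ)
    (hab : ∀ᵐ ω ∂μ, a ≤ X ω ∧ X ω ≤ b) :
    1 ≤ ∫ ω, Real.exp (X ω - ∫ ω', X ω' ∂μ) ∂μ ∧
      ∫ ω, Real.exp (X ω - ∫ ω', X ω' ∂μ) ∂μ ≤ Real.exp ((b - a) ^ 2 / 8) := by
  have hoeffding := hasSubgaussianMGF_of_mem_Icc hX.aemeasurable hab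
  refine ⟨one_le_integral_exp_sub_integral hX (by simpa using hoeffding.integrable_exp_mul 1), ?_⟩
  refine hoeffding.integral_exp_le.trans_eq ?_
  rw [NNReal.coe_pow, NNReal.coe_div, coe_nnnorm, Real.norm_eq_abs, div_pow, sq_abs]
  norm_num [div_div]
end

section
/- If Z is a complex random variable with |Z - E[Z]| ≤ α almost surely, then |E[e^{Z - E[Z]}] - 1| ≤ e^{α²/2} - 1. -/
open MeasureTheory ProbabilityTheory Set
open scoped Complex

/-! With `W = Z - E Z`, Taylor's formula with integral remainder gives
`E e^W - 1 = E (e^W - 1 - W) = ∫₀¹ (1 - t) E[W² e^{tW}] dt`. Since `‖e^{tW}‖ = e^{t Re W}` and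
`Re W` is centred with values in `[-α, α]`, Hoeffding's lemma bounds `‖E[W² e^{tW}]‖` by
`α² e^{α² t² / 2}`. This bound increases in `t`, so trading the weight `1 - t` for `t` only
enlarges the integral, and `∫₀¹ t α² e^{α² t² / 2} dt = e^{α² / 2} - 1`. -/

theorem Complex.exp_sub_one_sub_eq_integral (w : ℂ) :
    cexp w - 1 - w = ∫ t in (0 : ℝ)..1, (1 - t) • (w ^ 2 * cexp (t * w)) := by
  have hderiv (t : ℝ) : HasDerivAt (fun s : ℝ => (1 + w - s * w) * cexp (s * w))
      ((1 - t) • (w ^ 2 * cexp (t * w))) t := by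
    have hlin : HasDerivAt (fun s : ℝ => (s : ℂ) * w) w t := by
      simpa using (hasDerivAt_id t).ofReal_comp.mul_const w
    refine ((hlin.const_sub (1 + w)).mul hlin.cexp).congr_deriv ?_
    rw [Complex.real_smul]
    push_cast
    ring
  rw [intervalIntegral.integral_eq_sub_of_hasDerivAt (fun t _ => hderiv t)
    (Continuous.intervalIntegrable (by fun_prop) _ _)]
  simp only [Complex.ofReal_one, Complex.ofReal_zero, one_mul, zero_mul, add_sub_cancel_right,
    sub_zero, Complex.exp_zero, mul_one]
  ring

theorem integral_one_sub_mul_le_integral_mul {g : ℝ → ℝ} (hg : MonotoneOn g (Icc 0 1)) :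
    ∫ t in (0 : ℝ)..1, (1 - t) * g t ≤ ∫ t in (0 : ℝ)..1, t * g t := by
  have hgi : IntervalIntegrable g volume 0 1 :=
    MonotoneOn.intervalIntegrable (by rwa [uIcc_of_le zero_le_one])
  have hint {f h : ℝ → ℝ} (hf : Continuous f) (hh : IntervalIntegrable h volume 0 1) :
      IntervalIntegrable (fun t => f t * h t) volume 0 1 :=
    hh.continuousOn_mul hf.continuousOn
  -- `2t - 1` and `g t - g (1/2)` have the same sign on `[0, 1]`, and `∫₀¹ (2t - 1) = 0`.
  have hsign : ∀ t ∈ Icc (0 : ℝ) 1, 0 ≤ (2 * t - 1) * (g t - g (1 / 2)) := by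
    intro t ht
    have hhalf : (1 / 2 : ℝ) ∈ Icc 0 1 := ⟨by norm_num, by norm_num⟩
    rcases le_total t (1 / 2) with h | h
    · exact mul_nonneg_of_nonpos_of_nonpos (by linarith) (sub_nonpos.2 (hg ht hhalf h))
    · exact mul_nonneg (by linarith) (sub_nonneg.2 (hg hhalf ht h))
  have hmean : ∫ t in (0 : ℝ)..1, (2 * t - 1) = 0 := by
    rw [intervalIntegral.integral_sub (intervalIntegral.intervalIntegrable_id.const_mul 2)
      (by simp), intervalIntegral.integral_const_mul]
    norm_num
  have hsplit (t : ℝ) : t * g t - (1 - t) * g t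
      = (2 * t - 1) * (g t - g (1 / 2)) + (2 * t - 1) * g (1 / 2) := by ring
  rw [← sub_nonneg, ← intervalIntegral.integral_sub (hint (f := fun t => t) continuous_id hgi)
    (hint (f := fun t => 1 - t) (by fun_prop) hgi)]
  simp_rw [hsplit]
  rw [intervalIntegral.integral_add
    (hint (f := fun t => 2 * t - 1) (by fun_prop) (hgi.sub intervalIntegrable_const))
    (Continuous.intervalIntegrable (by fun_prop) _ _),
    intervalIntegral.integral_mul_const, hmean, zero_mul, add_zero]
  exact intervalIntegral.integral_nonneg zero_le_one hsign

theorem integral_mul_exp_sq_half (a : ℝ) :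
    ∫ t in (0 : ℝ)..1, t * (a ^ 2 * Real.exp (a ^ 2 * t ^ 2 / 2)) = Real.exp (a ^ 2 / 2) - 1 := by
  have hderiv (t : ℝ) : HasDerivAt (fun s => Real.exp (a ^ 2 * s ^ 2 / 2))
      (t * (a ^ 2 * Real.exp (a ^ 2 * t ^ 2 / 2))) t := by
    refine (((hasDerivAt_pow 2 t).const_mul (a ^ 2)).div_const 2).exp.congr_deriv ?_
    ring
  rw [intervalIntegral.integral_eq_sub_of_hasDerivAt (fun t _ => hderiv t)
    (Continuous.intervalIntegrable (by fun_prop) _ _)]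
  simp

section

variable {Ω : Type*} [MeasurableSpace Ω] {μ : Measure Ω} {W : Ω → ℂ} {α : ℝ}

theorem integral_cexp_sub_one_sub_eq [IsFiniteMeasure μ] (hW : AEMeasurable W μ)
    (hbdd : ∀ᵐ ω ∂μ, ‖W ω‖ ≤ α) :
    ∫ ω, (cexp (W ω) - 1 - W ω) ∂μ
      = ∫ t in (0 : ℝ)..1, (1 - t) • ∫ ω, W ω ^ 2 * cexp (t * W ω) ∂μ := by
  simp_rw [Complex.exp_sub_one_sub_eq_integral, ← integral_smul]
  refine (intervalIntegral_integral_swap ?_).symm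
  have hW' : AEMeasurable (fun z : ℝ × Ω => W z.2) ((volume.restrict (uIoc 0 1)).prod μ) :=
    hW.comp_quasiMeasurePreserving Measure.quasiMeasurePreserving_snd
  have : IsFiniteMeasure (volume.restrict (uIoc (0 : ℝ) 1)) := by
    rw [uIoc_of_le zero_le_one]; infer_instance
  refine Integrable.of_bound (by fun_prop) (α ^ 2 * Real.exp α) ?_
  filter_upwards [Measure.quasiMeasurePreserving_fst.ae (ae_restrict_mem measurableSet_uIoc),
    Measure.quasiMeasurePreserving_snd.ae hbdd] with ⟨t, ω⟩ ht hω
  rw [uIoc_of_le zero_le_one] at ht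
  have htW : ‖(t : ℂ) * W ω‖ ≤ α := by
    rw [norm_mul, Complex.norm_real, Real.norm_of_nonneg ht.1.le]
    nlinarith [norm_nonneg (W ω), ht.2]
  calc ‖(1 - t) • (W ω ^ 2 * cexp (t * W ω))‖
      = |1 - t| * (‖W ω‖ ^ 2 * ‖cexp (t * W ω)‖) := by
        rw [norm_smul, norm_mul, norm_pow, Real.norm_eq_abs]
    _ ≤ 1 * (α ^ 2 * Real.exp α) := by
        gcongr
        · rw [abs_le]; constructor <;> linarith [ht.1, ht.2]
        · exact (Complex.norm_exp_le_exp_norm _).trans (Real.exp_le_exp.2 htW)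
    _ = α ^ 2 * Real.exp α := one_mul _

theorem norm_integral_sq_mul_cexp_le [IsProbabilityMeasure μ] (hW : AEMeasurable W μ)
    (hbdd : ∀ᵐ ω ∂μ, ‖W ω‖ ≤ α) (hmean : ∫ ω, W ω ∂μ = 0) (t : ℝ) :
    ‖∫ ω, W ω ^ 2 * cexp (t * W ω) ∂μ‖ ≤ α ^ 2 * Real.exp (α ^ 2 * t ^ 2 / 2) := by
  have hsub : HasSubgaussianMGF (fun ω => (W ω).re) ((‖α - -α‖₊ / 2) ^ 2) μ := by
    refine hasSubgaussianMGF_of_mem_Icc_of_integral_eq_zero (by fun_prop) ?_ ?_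
    · filter_upwards [hbdd] with ω hω
      exact abs_le.1 ((Complex.abs_re_le_norm _).trans hω)
    · exact (integral_re (Integrable.of_bound hW.aestronglyMeasurable α hbdd)).trans
        (by rw [hmean]; rfl)
  have hc : (((‖α - -α‖₊ / 2) ^ 2 : NNReal) : ℝ) = α ^ 2 := by
    simp only [sub_neg_eq_add, NNReal.coe_pow, NNReal.coe_div, coe_nnnorm, Real.norm_eq_abs,
      NNReal.coe_ofNat]
    rw [div_pow, sq_abs]; ring
  calc ‖∫ ω, W ω ^ 2 * cexp (t * W ω) ∂μ‖
      ≤ ∫ ω, α ^ 2 * Real.exp (t * (W ω).re) ∂μ := by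
        refine norm_integral_le_of_norm_le ((hsub.integrable_exp_mul t).const_mul _) ?_
        filter_upwards [hbdd] with ω hω
        rw [norm_mul, norm_pow, Complex.norm_exp, Complex.re_ofReal_mul]
        gcongr
    _ = α ^ 2 * mgf (fun ω => (W ω).re) μ t := integral_const_mul _ _
    _ ≤ α ^ 2 * Real.exp (α ^ 2 * t ^ 2 / 2) := by
        gcongr
        simpa only [hc] using hsub.mgf_le t

theorem norm_integral_cexp_sub_one_le [IsProbabilityMeasure μ] (hW : AEMeasurable W μ)
    (hbdd : ∀ᵐ ω ∂μ, ‖W ω‖ ≤ α) (hmean : ∫ ω, W ω ∂μ = 0) :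
    ‖∫ ω, cexp (W ω) ∂μ - 1‖ ≤ Real.exp (α ^ 2 / 2) - 1 := by
  have hWi : Integrable W μ := .of_bound hW.aestronglyMeasurable α hbdd
  have hexpi : Integrable (fun ω => cexp (W ω)) μ := by
    refine .of_bound (by fun_prop) (Real.exp α) ?_
    filter_upwards [hbdd] with ω hω
    exact (Complex.norm_exp_le_exp_norm _).trans (Real.exp_le_exp.2 hω)
  have hcenter : ∫ ω, cexp (W ω) ∂μ - 1 = ∫ ω, (cexp (W ω) - 1 - W ω) ∂μ := by
    rw [integral_sub (by exact hexpi.sub (integrable_const 1)) hWi,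
      integral_sub hexpi (integrable_const 1), hmean]
    simp
  have hmono : MonotoneOn (fun t : ℝ => α ^ 2 * Real.exp (α ^ 2 * t ^ 2 / 2)) (Icc 0 1) := by
    intro s hs t _ hst
    dsimp only
    gcongr
    exact hs.1
  calc ‖∫ ω, cexp (W ω) ∂μ - 1‖
      = ‖∫ t in (0 : ℝ)..1, (1 - t) • ∫ ω, W ω ^ 2 * cexp (t * W ω) ∂μ‖ := by
        rw [hcenter, integral_cexp_sub_one_sub_eq hW hbdd]
    _ ≤ ∫ t in (0 : ℝ)..1, (1 - t) * (α ^ 2 * Real.exp (α ^ 2 * t ^ 2 / 2)) := by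
        refine intervalIntegral.norm_integral_le_of_norm_le zero_le_one ?_
          (Continuous.intervalIntegrable (by fun_prop) _ _)
        refine .of_forall fun t ht => ?_
        rw [norm_smul, Real.norm_of_nonneg (by linarith [ht.2])]
        gcongr
        · linarith [ht.2]
        · exact norm_integral_sq_mul_cexp_le hW hbdd hmean t
    _ ≤ ∫ t in (0 : ℝ)..1, t * (α ^ 2 * Real.exp (α ^ 2 * t ^ 2 / 2)) :=
        integral_one_sub_mul_le_integral_mul hmono
    _ = Real.exp (α ^ 2 / 2) - 1 := integral_mul_exp_sq_half α

end

theorem hoeffding_complex_cor_general {Ω : Type*} [MeasurableSpace Ω] (μ : Measure Ω)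
    [IsProbabilityMeasure μ] (Z : Ω → ℂ) (hm : Measurable Z)
    (α : ℝ)
    (hbdd : ∀ᵐ ω ∂μ, ‖Z ω - ∫ ω', Z ω' ∂μ‖ ≤ α) :
    ‖(∫ ω, Complex.exp (Z ω - ∫ ω', Z ω' ∂μ) ∂μ) - 1‖ ≤ Real.exp (α ^ 2 / 2) - 1 := by
  set m := ∫ ω', Z ω' ∂μ
  have hW : AEMeasurable (fun ω => Z ω - m) μ := (hm.sub_const m).aemeasurable
  have hZi : Integrable Z μ :=
    ((Integrable.of_bound hW.aestronglyMeasurable α hbdd).add (integrable_const m)).congr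
      (.of_forall fun ω => sub_add_cancel (Z ω) m)
  refine norm_integral_cexp_sub_one_le hW hbdd ?_
  rw [integral_sub hZi (integrable_const m)]
  simp [m]

theorem hoeffding_complex_cor {Ω : Type*} [MeasurableSpace Ω] (μ : Measure Ω)
    [IsProbabilityMeasure μ] (Z : Ω → ℂ) (hm : Measurable Z)
    (α : ℝ) (hα : 0 ≤ α)
    (hbdd : ∀ᵐ ω ∂μ, ‖Z ω - ∫ ω', Z ω' ∂μ‖ ≤ α) :
    ‖(∫ ω, Complex.exp (Z ω - ∫ ω', Z ω' ∂μ) ∂μ) - 1‖ ≤ Real.exp (α ^ 2 / 2) - 1 :=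
  hoeffding_complex_cor_general μ Z hm α hbdd
end

section
/- Let Z be a complex random variable with E[Z] = 0 supported on exactly two points, lying on a line through the origin, so Z = e^{iθ}·X for a real mean-zero random variable X supported on {-x, x'} with x, x' ≥ 0. If the diameter of the support of Z is at most d, then |E[e^Z] - 1| ≤ E[e^X] - 1 ≤ e^{d²/8} - 1 (after replacing X by -X if necessary so that all moments of X are nonnegative). -/
/-!
After a sign change `ε = ±1`, the variable `Y = ε X` takes values in `{-a, b}` with `0 ≤ a ≤ b`.
Then `Y ^ (k + 1) ≥ a ^ k Y` on the support, so every moment of `Y` of order at least two is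
nonnegative. As `Y` is bounded, `z ↦ E[exp (z Y)]` is entire with Taylor series
`∑ zⁿ E[Yⁿ] / n!`; since `Z = (w ε) Y` with `‖w ε‖ = 1`, comparing this series termwise with the
one at `z = 1` gives `‖E[exp Z] - 1‖ ≤ E[exp Y] - 1`. The last bound is Hoeffding's lemma.
-/

open MeasureTheory ProbabilityTheory
open scoped Nat

section
variable {Ω : Type*} [MeasurableSpace Ω] {μ : Measure Ω} {X : Ω → ℝ}

lemma hasSum_complexMGF (h_int : ∀ t, Integrable (fun ω ↦ Real.exp (t * X ω)) μ) (z : ℂ) :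
    HasSum (fun n ↦ z ^ n * ((n ! : ℝ)⁻¹ * ∫ ω, X ω ^ n ∂μ : ℝ)) (complexMGF X μ z) := by
  have h_univ : integrableExpSet X μ = Set.univ := Set.eq_univ_of_forall h_int
  have h_entire : Differentiable ℂ (complexMGF X μ) := fun z ↦
    (differentiableOn_complexMGF z (by simp [h_univ])).differentiableAt
      (by simp [h_univ])
  refine (Complex.hasSum_taylorSeries_of_entire h_entire 0 z).congr_fun fun n ↦ ?_
  rw [iteratedDeriv_complexMGF (by simp [h_univ])]
  simp only [sub_zero, zero_mul, Complex.exp_zero, mul_one, smul_eq_mul]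
  push_cast [← integral_complex_ofReal]
  ring

lemma hasSum_mgf (h_int : ∀ t, Integrable (fun ω ↦ Real.exp (t * X ω)) μ) (t : ℝ) :
    HasSum (fun n ↦ t ^ n * ((n ! : ℝ)⁻¹ * ∫ ω, X ω ^ n ∂μ)) (mgf X μ t) := by
  rw [← Complex.hasSum_ofReal, ← complexMGF_ofReal]
  exact_mod_cast hasSum_complexMGF h_int t

lemma norm_complexMGF_sub_one_le [IsProbabilityMeasure μ]
    (h_int : ∀ t, Integrable (fun ω ↦ Real.exp (t * X ω)) μ) (hmean : ∫ ω, X ω ∂μ = 0)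
    (hmom : ∀ n, 0 ≤ ∫ ω, X ω ^ (n + 2) ∂μ) (z : ℂ) :
    ‖complexMGF X μ z - 1‖ ≤ mgf X μ ‖z‖ - 1 := by
  have hC := (hasSum_nat_add_iff' 2).mpr (hasSum_complexMGF h_int z)
  have hR := (hasSum_nat_add_iff' 2).mpr (hasSum_mgf h_int ‖z‖)
  simp only [Finset.sum_range_succ, Finset.sum_range_zero, pow_zero, pow_one, hmean,
    integral_const, probReal_univ, smul_eq_mul, mul_zero, Nat.factorial_zero, Nat.factorial_one,
    Nat.cast_one, inv_one, mul_one, Complex.ofReal_zero, Complex.ofReal_one, zero_add,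
    add_zero] at hC hR
  refine hC.norm_le_of_bounded hR fun n ↦ ?_
  rw [norm_mul, norm_pow, Complex.norm_real, Real.norm_of_nonneg (by positivity [hmom n])]

lemma integral_pow_succ_nonneg_of_two_point [IsFiniteMeasure μ] (hX : AEMeasurable X μ)
    {a b : ℝ} (ha : 0 ≤ a) (hab : a ≤ b) (hsupp : ∀ᵐ ω ∂μ, X ω = -a ∨ X ω = b)
    (hmean : ∫ ω, X ω ∂μ = 0) (k : ℕ) :
    0 ≤ ∫ ω, X ω ^ (k + 1) ∂μ := by
  have h_abs : ∀ᵐ ω ∂μ, |X ω| ≤ b := by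
    filter_upwards [hsupp] with ω hω
    rcases hω with h | h <;> rw [h] <;> simp [abs_of_nonneg, ha, hab, ha.trans hab]
  have h_int : ∀ n : ℕ, Integrable (fun ω ↦ X ω ^ n) μ := fun n ↦
    .of_bound (hX.pow_const n).aestronglyMeasurable (b ^ n) <| by
      filter_upwards [h_abs] with ω hω
      simpa [abs_pow] using pow_le_pow_left₀ (abs_nonneg _) hω n
  have h_le : (fun ω ↦ a ^ k * X ω) ≤ᵐ[μ] fun ω ↦ X ω ^ (k + 1) := by
    filter_upwards [hsupp] with ω hω
    rcases hω with h | h <;> rw [h]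
    · rcases (k + 1).even_or_odd with he | ho
      · rw [he.neg_pow]; nlinarith [pow_nonneg ha k, pow_succ a k]
      · rw [ho.neg_pow, pow_succ]; linarith
    · rw [pow_succ]; exact mul_le_mul_of_nonneg_right (pow_le_pow_left₀ ha hab k) (ha.trans hab)
  calc 0 = a ^ k * ∫ ω, X ω ∂μ := by rw [hmean, mul_zero]
    _ = ∫ ω, a ^ k * X ω ∂μ := (integral_const_mul _ _).symm
    _ ≤ ∫ ω, X ω ^ (k + 1) ∂μ :=
      integral_mono_ae (by simpa using (h_int 1).const_mul (a ^ k)) (h_int _) h_le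

lemma mgf_le_exp_of_mem_Icc [IsProbabilityMeasure μ] (hX : AEMeasurable X μ) {a b : ℝ}
    (hab : a ≤ b) (hb : ∀ᵐ ω ∂μ, X ω ∈ Set.Icc a b) (hmean : ∫ ω, X ω ∂μ = 0) (t : ℝ) :
    mgf X μ t ≤ Real.exp ((b - a) ^ 2 * t ^ 2 / 8) := by
  convert (hasSubgaussianMGF_of_mem_Icc_of_integral_eq_zero hX hb hmean).mgf_le t using 2
  simp [Real.norm_eq_abs, abs_of_nonneg (sub_nonneg.mpr hab)]
  ring

lemma exists_sign_mul_eq_neg_min_or_eq_max {x x' : ℝ} (hsupp : ∀ᵐ ω ∂μ, X ω = -x ∨ X ω = x') :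
    ∃ ε : ℝ, (ε = 1 ∨ ε = -1) ∧ ∀ᵐ ω ∂μ, ε * X ω = -min x x' ∨ ε * X ω = max x x' := by
  rcases le_total x x' with h | h
  · exact ⟨1, .inl rfl, by simpa [h] using hsupp⟩
  · refine ⟨-1, .inr rfl, ?_⟩
    filter_upwards [hsupp] with ω hω
    rcases hω with hω | hω <;> simp [hω, h]

end

theorem two_point_bound {Ω : Type*} [MeasurableSpace Ω] (μ : Measure Ω)
    [IsProbabilityMeasure μ] (X : Ω → ℝ) (hm : Measurable X)
    (θ x x' d : ℝ) (hx : 0 ≤ x) (hx' : 0 ≤ x') (hd : x + x' ≤ d)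
    (hsupp : ∀ᵐ ω ∂μ, X ω = -x ∨ X ω = x')
    (hmean : ∫ ω, X ω ∂μ = 0)
    (Z : Ω → ℂ) (hZ : ∀ ω, Z ω = Complex.exp (θ * Complex.I) * (X ω : ℂ)) :
    ∃ ε : ℝ, (ε = 1 ∨ ε = -1) ∧
      (∀ k : ℕ, 2 ≤ k → 0 ≤ ∫ ω, (ε * X ω) ^ k ∂μ) ∧
      ‖(∫ ω, Complex.exp (Z ω) ∂μ) - 1‖ ≤ (∫ ω, Real.exp (ε * X ω) ∂μ) - 1 ∧
      (∫ ω, Real.exp (ε * X ω) ∂μ) - 1 ≤ Real.exp (d ^ 2 / 8) - 1 := by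
  obtain ⟨ε, hε, hεX⟩ := exists_sign_mul_eq_neg_min_or_eq_max hsupp
  set Y := fun ω ↦ ε * X ω
  have hY : AEMeasurable Y μ := (hm.const_mul ε).aemeasurable
  have hY_mean : ∫ ω, Y ω ∂μ = 0 := by simp [Y, integral_const_mul, hmean]
  have h_min : 0 ≤ min x x' := le_min hx hx'
  have h_le : -min x x' ≤ max x x' := (neg_nonpos.mpr h_min).trans (le_max_of_le_left hx)
  have hY_Icc : ∀ᵐ ω ∂μ, Y ω ∈ Set.Icc (-min x x') (max x x') := by
    filter_upwards [hεX] with ω hω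
    rcases hω with hω | hω <;> simp only [Y, hω, Set.mem_Icc] <;> exact ⟨by linarith, by linarith⟩
  have hY_mom : ∀ k, 0 ≤ ∫ ω, Y ω ^ (k + 1) ∂μ :=
    integral_pow_succ_nonneg_of_two_point hY h_min min_le_max hεX hY_mean
  have hY_mgf : mgf Y μ 1 = ∫ ω, Real.exp (ε * X ω) ∂μ := by simp [mgf, Y]
  have hε_norm : ‖(ε : ℂ)‖ = 1 := by rcases hε with rfl | rfl <;> simp
  have hZ_Y : ∫ ω, Complex.exp (Z ω) ∂μ = complexMGF Y μ (Complex.exp (θ * Complex.I) * ε) := by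
    have hε_sq : (ε : ℂ) * ε = 1 := by rcases hε with rfl | rfl <;> norm_num
    simp only [complexMGF, hZ, Y, Complex.ofReal_mul]
    congr 1 with ω
    congr 1
    linear_combination (-(Complex.exp (θ * Complex.I) * X ω)) * hε_sq
  refine ⟨ε, hε, fun k hk ↦ ?_, ?_, ?_⟩
  · obtain ⟨n, rfl⟩ := Nat.exists_eq_add_of_le' hk
    exact hY_mom (n + 1)
  · have := norm_complexMGF_sub_one_le (fun t ↦ integrable_exp_mul_of_mem_Icc hY hY_Icc)
      hY_mean (fun n ↦ hY_mom (n + 1)) (Complex.exp (θ * Complex.I) * ε)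
    rwa [norm_mul, Complex.norm_exp_ofReal_mul_I, hε_norm, one_mul, ← hZ_Y, hY_mgf] at this
  · have := mgf_le_exp_of_mem_Icc hY h_le hY_Icc hY_mean 1
    rw [hY_mgf, sub_neg_eq_add, max_add_min, one_pow, mul_one] at this
    gcongr
    exact this.trans (Real.exp_le_exp.mpr (by gcongr))
end

section
/- Let F : {z ∈ ℂ : |z| ≤ d} → ℂ be continuous, and let 𝒵_d denote the class of complex random variables Z with E[Z] = 0 and diam Z ≤ d, and 𝒵_d^{(3)} its subclass of variables supported on at most 3 points. Then sup_{Z ∈ 𝒵_d} |E[F(Z)]| = sup_{Z ∈ 𝒵_d^{(3)}} |E[F(Z)]|. -/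
/-!
Every value in the first set is dominated by one in the second, so it suffices to replace a
centred measure `μ` of diameter at most `d` by a centred measure on at most three points, still
of diameter at most `d`, without decreasing `‖∫ F‖`. The support `K` of `μ` is compact, has
diameter at most `d` and, since `μ` is centred, lies in the closed ball of radius `d`, where `F`
is continuous. Choose a functional `ℓ` of norm at most one with `ℓ (∫ F dμ) = ‖∫ F dμ‖` and put
`g = ℓ ∘ F`. Then `(0, ‖∫ F dμ‖) = ∫ (x, g x) dμ` lies in the convex hull of the graph of `g`
over `K` (a compact set, by Carathéodory), so it is a finite convex combination
`∑ wᵢ (xᵢ, g xᵢ)`. As long as the `xᵢ` are affinely dependent, moving the weights along an affine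
relation, in the direction that does not decrease `∑ wᵢ g xᵢ`, kills one of them without changing
`∑ wᵢ` or `∑ wᵢ xᵢ`. This ends with at most `dim ℂ + 1 = 3` points, whose discrete measure `ν`
satisfies `‖∫ F dμ‖ ≤ ∑ wᵢ g xᵢ = ℓ (∫ F dν) ≤ ‖∫ F dν‖`.
-/

open MeasureTheory Set Finset Module Metric

section ConvexHull

variable {E : Type*} [NormedAddCommGroup E] [NormedSpace ℝ E] [FiniteDimensional ℝ E]

theorem convexHull_eq_biUnion_image_stdSimplex (s : Set E) :
    convexHull ℝ s = ⋃ k ∈ Finset.range (finrank ℝ E + 2),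
      (fun p : (Fin k → ℝ) × (Fin k → E) => ∑ i, p.1 i • p.2 i) ''
        (stdSimplex ℝ (Fin k) ×ˢ univ.pi fun _ => s) := by
  refine Subset.antisymm (fun x hx => ?_) ?_
  · obtain ⟨ι, _, z, w, hzs, hz, hw0, hw1, rfl⟩ := eq_pos_convex_span_of_mem_convexHull hx
    have hcard : Fintype.card ι < finrank ℝ E + 2 :=
      calc Fintype.card ι ≤ finrank ℝ (vectorSpan ℝ (range z)) + 1 := hz.card_le_finrank_succ
        _ < finrank ℝ E + 2 := by have := Submodule.finrank_le (vectorSpan ℝ (range z)); omega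
    let e := Fintype.equivFin ι
    refine mem_biUnion (Finset.mem_range.2 hcard) ⟨(w ∘ e.symm, z ∘ e.symm), ⟨⟨?_, ?_⟩, ?_⟩, ?_⟩
    · exact fun i => (hw0 _).le
    · simpa [Function.comp_def, e.symm.sum_comp] using hw1
    · exact fun i _ => hzs (mem_range_self _)
    · exact e.symm.sum_comp fun i => w i • z i
  · simp only [iUnion_subset_iff, image_subset_iff]
    rintro k - ⟨w, z⟩ ⟨hw, hz⟩
    exact (convex_convexHull ℝ s).sum_mem (fun i _ => hw.1 i) hw.2
      fun i _ => subset_convexHull ℝ s (hz i (mem_univ i))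

theorem IsCompact.convexHull {s : Set E} (hs : IsCompact s) : IsCompact (convexHull ℝ s) := by
  rw [convexHull_eq_biUnion_image_stdSimplex]
  exact isCompact_biUnion _ fun k _ =>
    ((isCompact_stdSimplex ℝ (Fin k)).prod (isCompact_univ_pi fun _ => hs)).image (by fun_prop)

theorem integral_mem_convexHull_image {α : Type*} [MeasurableSpace α] {μ : Measure α}
    [IsProbabilityMeasure μ] {f : α → E} {K : Set α} (hK : IsCompact (f '' K))
    (h : ∀ᵐ x ∂μ, x ∈ K) (hf : Integrable f μ) : ∫ x, f x ∂μ ∈ convexHull ℝ (f '' K) :=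
  (convex_convexHull ℝ _).integral_mem hK.convexHull.isClosed
    (h.mono fun _ hx => subset_convexHull ℝ _ (mem_image_of_mem f hx)) hf

end ConvexHull

section Reweighting

variable {E : Type*} [AddCommGroup E] [Module ℝ E]

theorem exists_ssubset_reweighting_of_not_affineIndependent {t : Finset E}
    (ht : ¬AffineIndependent ℝ ((↑) : t → E)) {w : E → ℝ} (hw : ∀ x ∈ t, 0 ≤ w x) (c : E → ℝ) :
    ∃ t' ⊂ t, ∃ w' : E → ℝ, (∀ x ∈ t', 0 ≤ w' x) ∧ ∑ x ∈ t', w' x = ∑ x ∈ t, w x ∧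
      ∑ x ∈ t', w' x • x = ∑ x ∈ t, w x • x ∧ ∑ x ∈ t, w x * c x ≤ ∑ x ∈ t', w' x * c x := by
  classical
  obtain ⟨f, hf_smul, hf_sum, hf_ne⟩ := exists_nontrivial_relation_sum_zero_of_not_affine_ind ht
  -- orient the affine relation so that moving against it does not decrease the objective `c`
  obtain ⟨g, hg_smul, hg_sum, hg_pos, hg_c⟩ : ∃ g : E → ℝ, ∑ x ∈ t, g x • x = 0 ∧
      ∑ x ∈ t, g x = 0 ∧ (∃ x ∈ t, 0 < g x) ∧ ∑ x ∈ t, g x * c x ≤ 0 := by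
    rcases le_total (∑ x ∈ t, f x * c x) 0 with h | h
    · exact ⟨f, hf_smul, hf_sum, exists_pos_of_sum_zero_of_exists_nonzero f hf_sum hf_ne, h⟩
    · refine ⟨-f, by simp [hf_smul], by simp [hf_sum], ?_, by simpa using h⟩
      exact exists_pos_of_sum_zero_of_exists_nonzero _ (by simp [hf_sum]) (by simpa using hf_ne)
  obtain ⟨y, hy, hy_min⟩ := {x ∈ t | 0 < g x}.exists_min_image (fun x => w x / g x)
    (by simpa [Finset.Nonempty] using hg_pos)
  rw [mem_filter] at hy
  set r := w y / g y
  have hr : 0 ≤ r := div_nonneg (hw y hy.1) hy.2.le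
  set v : E → ℝ := fun x => w x - r * g x with hv
  have hvanish : v y = 0 := by simp only [hv, r, div_mul_cancel₀ _ hy.2.ne', sub_self]
  refine ⟨t.erase y, erase_ssubset hy.1, v, ?_, ?_, ?_, ?_⟩
  · intro x hx
    have hxt := mem_of_mem_erase hx
    simp only [hv]
    rcases lt_or_ge 0 (g x) with hgx | hgx
    · have := hy_min x (mem_filter.2 ⟨hxt, hgx⟩)
      rw [le_div_iff₀ hgx] at this
      linarith
    · linarith [mul_nonpos_of_nonneg_of_nonpos hr hgx, hw x hxt]
  · rw [sum_erase _ hvanish, hv, sum_sub_distrib, ← mul_sum, hg_sum, mul_zero, sub_zero]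
  · rw [sum_erase _ (by rw [hvanish, zero_smul])]
    simp only [hv, sub_smul, mul_smul, sum_sub_distrib, ← smul_sum, hg_smul, smul_zero, sub_zero]
  · rw [sum_erase _ (by rw [hvanish, zero_mul])]
    simp only [hv, sub_mul, sum_sub_distrib, mul_assoc, ← mul_sum]
    linarith [mul_nonpos_of_nonneg_of_nonpos hr hg_c]

variable [FiniteDimensional ℝ E]

theorem exists_subset_reweighting_card_le_finrank_succ (t : Finset E) {w : E → ℝ}
    (hw : ∀ x ∈ t, 0 ≤ w x) (c : E → ℝ) :
    ∃ t' ⊆ t, #t' ≤ finrank ℝ E + 1 ∧ ∃ w' : E → ℝ, (∀ x ∈ t', 0 ≤ w' x) ∧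
      ∑ x ∈ t', w' x = ∑ x ∈ t, w x ∧ ∑ x ∈ t', w' x • x = ∑ x ∈ t, w x • x ∧
      ∑ x ∈ t, w x * c x ≤ ∑ x ∈ t', w' x * c x := by
  induction t using Finset.strongInduction generalizing w with
  | H t ih =>
  by_cases ht : AffineIndependent ℝ ((↑) : t → E)
  · refine ⟨t, Finset.Subset.rfl, ?_, w, hw, rfl, rfl, le_rfl⟩
    calc #t = Fintype.card t := (Fintype.card_coe t).symm
      _ ≤ finrank ℝ (vectorSpan ℝ (range ((↑) : t → E))) + 1 := ht.card_le_finrank_succ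
      _ ≤ finrank ℝ E + 1 := by gcongr; exact Submodule.finrank_le _
  · obtain ⟨s, hst, v, hv, hv_sum, hv_smul, hv_c⟩ :=
      exists_ssubset_reweighting_of_not_affineIndependent ht hw c
    obtain ⟨t', ht's, hcard, w', hw', h_sum, h_smul, h_c⟩ := ih s hst hv
    exact ⟨t', ht's.trans hst.subset, hcard, w', hw', h_sum.trans hv_sum, h_smul.trans hv_smul,
      hv_c.trans h_c⟩

end Reweighting

theorem exists_finset_of_mem_convexHull_graph {E : Type*} [AddCommGroup E] [Module ℝ E]
    {K : Set E} {g : E → ℝ} {x : E} {s : ℝ}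
    (h : (x, s) ∈ convexHull ℝ ((fun z => (z, g z)) '' K)) :
    ∃ t : Finset E, ↑t ⊆ K ∧ ∃ w : E → ℝ, (∀ z ∈ t, 0 ≤ w z) ∧ ∑ z ∈ t, w z = 1 ∧
      ∑ z ∈ t, w z • z = x ∧ ∑ z ∈ t, w z * g z = s := by
  classical
  rw [convexHull_eq_union_convexHull_finite_subsets] at h
  simp only [mem_iUnion] at h
  obtain ⟨T, hTK, hT⟩ := h
  obtain ⟨W, hW0, hW1, hWx⟩ := Finset.mem_convexHull'.1 hT
  have hsnd : ∀ p ∈ T, g p.1 = p.2 := by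
    intro p hp
    obtain ⟨z, -, rfl⟩ := hTK hp
    rfl
  have hinj : Set.InjOn Prod.fst (T : Set (E × ℝ)) := fun p hp q hq hpq =>
    Prod.ext hpq (by rw [← hsnd p hp, ← hsnd q hq, hpq])
  set w : E → ℝ := fun z => W (z, g z) with hw
  have hW : ∀ p ∈ T, w p.1 = W p := fun p hp => by simp only [hw, hsnd p hp]
  have hWx₁ := congrArg Prod.fst hWx
  have hWx₂ := congrArg Prod.snd hWx
  simp only [Prod.fst_sum, Prod.snd_sum, Prod.smul_fst, Prod.smul_snd, smul_eq_mul] at hWx₁ hWx₂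
  refine ⟨T.image Prod.fst, ?_, w, ?_, ?_, ?_, ?_⟩
  · intro z hz
    obtain ⟨p, hp, rfl⟩ := Finset.mem_image.1 hz
    obtain ⟨z', hz', rfl⟩ := hTK hp
    exact hz'
  · intro z hz
    obtain ⟨p, hp, rfl⟩ := Finset.mem_image.1 hz
    exact (hW p hp).symm ▸ hW0 p hp
  · rw [sum_image hinj, ← hW1]
    exact sum_congr rfl hW
  · rw [sum_image hinj, ← hWx₁]
    exact sum_congr rfl fun p hp => by rw [hW p hp]
  · rw [sum_image hinj, ← hWx₂]
    exact sum_congr rfl fun p hp => by rw [hW p hp, hsnd p hp]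

theorem MeasureTheory.Measure.support_prod_subset_of_ae_mem {X Y : Type*} [TopologicalSpace X]
    [MeasurableSpace X] [TopologicalSpace Y] [MeasurableSpace Y] {μ : Measure X} {ν : Measure Y}
    [SFinite ν] {C : Set (X × Y)} (hC : IsClosed C) (h : ∀ᵐ p ∂μ.prod ν, p ∈ C) :
    μ.support ×ˢ ν.support ⊆ C := by
  rintro ⟨x, y⟩ ⟨hx, hy⟩
  by_contra hxy
  obtain ⟨U, hU, V, hV, hUV⟩ := mem_nhds_prod_iff.1 (hC.isOpen_compl.mem_nhds hxy)
  have hpos : 0 < μ.prod ν (U ×ˢ V) := by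
    rw [Measure.prod_prod]
    exact ENNReal.mul_pos ((Measure.mem_support_iff_forall x).1 hx U hU).ne'
      ((Measure.mem_support_iff_forall y).1 hy V hV).ne'
  exact hpos.ne' (measure_mono_null hUV (ae_iff.1 h))

theorem ContinuousOn.integrable_of_isCompact_of_ae_mem {X G : Type*} [TopologicalSpace X]
    [T2Space X] [MeasurableSpace X] [OpensMeasurableSpace X] [NormedAddCommGroup G]
    {μ : Measure X} [IsFiniteMeasure μ] {f : X → G} {K : Set X} (hf : ContinuousOn f K)
    (hK : IsCompact K) (h : ∀ᵐ x ∂μ, x ∈ K) : Integrable f μ := by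
  simpa [IntegrableOn, Measure.restrict_eq_self_of_ae_mem h] using
    hf.integrableOn_compact (μ := μ) hK

section Support

variable {E : Type*} [NormedAddCommGroup E] [MeasurableSpace E] {μ : Measure E} {d : ℝ}

theorem norm_sub_le_of_mem_support [SFinite μ] (h : ∀ᵐ p ∂μ.prod μ, ‖p.1 - p.2‖ ≤ d) {x y : E}
    (hx : x ∈ μ.support) (hy : y ∈ μ.support) : ‖x - y‖ ≤ d :=
  Measure.support_prod_subset_of_ae_mem (C := {p | ‖p.1 - p.2‖ ≤ d})
    (isClosed_le (by fun_prop) continuous_const) h (mk_mem_prod hx hy)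

theorem ae_prod_norm_sub_le_of_ae_mem [SFinite μ] {K : Set E}
    (hK : ∀ x ∈ K, ∀ y ∈ K, ‖x - y‖ ≤ d) (h : ∀ᵐ x ∂μ, x ∈ K) :
    ∀ᵐ p ∂μ.prod μ, ‖p.1 - p.2‖ ≤ d := by
  filter_upwards [Measure.quasiMeasurePreserving_fst.ae h,
    Measure.quasiMeasurePreserving_snd.ae h] with p h₁ h₂
  exact hK _ h₁ _ h₂

variable [ProperSpace E] [IsProbabilityMeasure μ]

theorem isCompact_support_of_ae_prod_norm_sub_le (h : ∀ᵐ p ∂μ.prod μ, ‖p.1 - p.2‖ ≤ d) :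
    IsCompact μ.support := by
  obtain ⟨x₀, hx₀⟩ := Measure.nonempty_support (IsProbabilityMeasure.ne_zero μ)
  refine (isCompact_closedBall x₀ d).of_isClosed_subset Measure.isClosed_support fun x hx => ?_
  rw [mem_closedBall, dist_eq_norm]
  exact norm_sub_le_of_mem_support h hx hx₀

theorem support_subset_closedBall_of_integral_eq_zero [NormedSpace ℝ E] [CompleteSpace E]
    [OpensMeasurableSpace E] (hmean : ∫ x, x ∂μ = 0) (h : ∀ᵐ p ∂μ.prod μ, ‖p.1 - p.2‖ ≤ d) :
    μ.support ⊆ closedBall 0 d := by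
  intro x hx
  have hae : ∀ᵐ y ∂μ, y ∈ μ.support := Measure.support_mem_ae
  have hint : Integrable (fun y : E => y) μ :=
    continuousOn_id.integrable_of_isCompact_of_ae_mem (isCompact_support_of_ae_prod_norm_sub_le h)
      hae
  have hx_eq : ∫ y, (x - y) ∂μ = x := by
    rw [integral_sub (integrable_const x) hint, hmean, sub_zero, integral_const, probReal_univ,
      one_smul]
  rw [mem_closedBall_zero_iff, ← hx_eq]
  simpa using norm_integral_le_of_norm_le_const
    (hae.mono fun y hy => norm_sub_le_of_mem_support h hx hy)

end Support

section DiracCombination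

variable {α : Type*} [MeasurableSpace α]

noncomputable def diracCombination (t : Finset α) (w : α → ℝ) : Measure α :=
  ∑ x ∈ t, ENNReal.ofReal (w x) • Measure.dirac x

variable {t : Finset α} {w : α → ℝ}

theorem diracCombination_compl [MeasurableSingletonClass α] (t : Finset α) (w : α → ℝ) :
    diracCombination t w (↑t)ᶜ = 0 := by
  simp only [diracCombination, Measure.coe_finsetSum, Finset.sum_apply, Measure.smul_apply,
    Measure.dirac_apply' _ t.measurableSet.compl]
  exact sum_eq_zero fun x hx => by simp [hx]

theorem isProbabilityMeasure_diracCombination (hw : ∀ x ∈ t, 0 ≤ w x) (h1 : ∑ x ∈ t, w x = 1) :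
    IsProbabilityMeasure (diracCombination t w) := by
  constructor
  simp [diracCombination, ← ENNReal.ofReal_sum_of_nonneg hw, h1]

theorem integral_diracCombination [MeasurableSingletonClass α] {G : Type*} [NormedAddCommGroup G]
    [NormedSpace ℝ G] [CompleteSpace G] (hw : ∀ x ∈ t, 0 ≤ w x) (f : α → G) :
    ∫ x, f x ∂diracCombination t w = ∑ x ∈ t, w x • f x := by
  rw [diracCombination, integral_finsetSum_measure fun x _ =>
    (integrable_dirac enorm_lt_top).smul_measure ENNReal.ofReal_ne_top]
  exact sum_congr rfl fun x hx => by
    rw [integral_smul_measure, integral_dirac, ENNReal.toReal_ofReal (hw x hx)]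

end DiracCombination

theorem exists_finset_supported_norm_integral_le {E G : Type*} [NormedAddCommGroup E]
    [NormedSpace ℝ E] [FiniteDimensional ℝ E] [MeasurableSpace E] [BorelSpace E]
    [NormedAddCommGroup G] [NormedSpace ℝ G] [CompleteSpace G] {d : ℝ} {F : E → G}
    (hF : ContinuousOn F (closedBall 0 d)) (μ : Measure E) [IsProbabilityMeasure μ]
    (hmean : ∫ x, x ∂μ = 0) (hdiam : ∀ᵐ p ∂μ.prod μ, ‖p.1 - p.2‖ ≤ d) :
    ∃ ν : Measure E, IsProbabilityMeasure ν ∧ ∫ x, x ∂ν = 0 ∧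
      (∀ᵐ p ∂ν.prod ν, ‖p.1 - p.2‖ ≤ d) ∧ (∃ s : Finset E, #s ≤ finrank ℝ E + 1 ∧ ν (↑s)ᶜ = 0) ∧
      ‖∫ x, F x ∂μ‖ ≤ ‖∫ x, F x ∂ν‖ := by
  set K := μ.support
  have hK : IsCompact K := isCompact_support_of_ae_prod_norm_sub_le hdiam
  have hKμ : ∀ᵐ x ∂μ, x ∈ K := Measure.support_mem_ae
  have hFK : ContinuousOn F K :=
    hF.mono (support_subset_closedBall_of_integral_eq_zero hmean hdiam)
  obtain ⟨ℓ, hℓ_norm, hℓ⟩ := exists_dual_vector'' ℝ (∫ x, F x ∂μ)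
  set g : E → ℝ := fun x => ℓ (F x)
  have hgraph : ContinuousOn (fun x => (x, g x)) K :=
    continuousOn_id.prodMk (ℓ.continuous.comp_continuousOn hFK)
  have hmem : ((0 : E), ‖∫ x, F x ∂μ‖) ∈ convexHull ℝ ((fun x => (x, g x)) '' K) := by
    have hint := hgraph.integrable_of_isCompact_of_ae_mem hK hKμ
    have := integral_mem_convexHull_image (hK.image_of_continuousOn hgraph) hKμ hint
    rwa [integral_pair hint.fst hint.snd, hmean,
      ℓ.integral_comp_comm (hFK.integrable_of_isCompact_of_ae_mem hK hKμ), hℓ] at this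
  obtain ⟨t, htK, w, hw, hw_sum, hw_smul, hw_g⟩ := exists_finset_of_mem_convexHull_graph hmem
  obtain ⟨s, hst, hs, v, hv, hv_sum, hv_smul, hv_g⟩ :=
    exists_subset_reweighting_card_le_finrank_succ t hw g
  have hsK : ↑s ⊆ K := (coe_subset.2 hst).trans htK
  have hν : IsProbabilityMeasure (diracCombination s v) :=
    isProbabilityMeasure_diracCombination hv (hv_sum.trans hw_sum)
  refine ⟨diracCombination s v, hν, ?_, ?_, ⟨s, hs, diracCombination_compl s v⟩, ?_⟩
  · rw [integral_diracCombination hv, hv_smul, hw_smul]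
  · exact ae_prod_norm_sub_le_of_ae_mem
      (fun x hx y hy => norm_sub_le_of_mem_support hdiam (hsK hx) (hsK hy))
      (mem_ae_iff.2 (diracCombination_compl s v))
  · calc ‖∫ x, F x ∂μ‖ = ∑ x ∈ t, w x * g x := hw_g.symm
      _ ≤ ∑ x ∈ s, v x * g x := hv_g
      _ = ℓ (∫ x, F x ∂diracCombination s v) := by
        simp [integral_diracCombination hv, map_sum, g]
      _ ≤ ‖∫ x, F x ∂diracCombination s v‖ :=
        (le_abs_self _).trans ((ℓ.le_of_opNorm_le hℓ_norm _).trans (one_mul _).le)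

theorem sup_three_point_general (d : ℝ) (F : ℂ → ℂ)
    (hF : ContinuousOn F (Metric.closedBall 0 d)) :
    sSup {r : ℝ | ∃ μ : Measure ℂ, IsProbabilityMeasure μ ∧
        (∫ z, z ∂μ) = 0 ∧ (∀ᵐ p ∂(μ.prod μ), ‖p.1 - p.2‖ ≤ d) ∧
        r = ‖∫ z, F z ∂μ‖} =
      sSup {r : ℝ | ∃ μ : Measure ℂ, IsProbabilityMeasure μ ∧
        (∫ z, z ∂μ) = 0 ∧ (∀ᵐ p ∂(μ.prod μ), ‖p.1 - p.2‖ ≤ d) ∧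
        (∃ s : Finset ℂ, s.card ≤ 3 ∧ μ (↑s : Set ℂ)ᶜ = 0) ∧
        r = ‖∫ z, F z ∂μ‖} := by
  refine csSup_eq_csSup_of_forall_exists_le ?_ ?_
  · rintro _ ⟨μ, hμ, hmean, hdiam, rfl⟩
    obtain ⟨ν, hν, hνmean, hνdiam, ⟨s, hs, hνs⟩, hle⟩ :=
      exists_finset_supported_norm_integral_le hF μ hmean hdiam
    rw [Complex.finrank_real_complex] at hs
    exact ⟨_, ⟨ν, hν, hνmean, hνdiam, ⟨s, hs, hνs⟩, rfl⟩, hle⟩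
  · rintro _ ⟨μ, hμ, hmean, hdiam, -, rfl⟩
    exact ⟨_, ⟨μ, hμ, hmean, hdiam, rfl⟩, le_rfl⟩

theorem sup_three_point (d : ℝ) (hd : 0 < d) (F : ℂ → ℂ)
    (hF : ContinuousOn F (Metric.closedBall 0 d)) :
    sSup {r : ℝ | ∃ μ : Measure ℂ, IsProbabilityMeasure μ ∧
        (∫ z, z ∂μ) = 0 ∧ (∀ᵐ p ∂(μ.prod μ), ‖p.1 - p.2‖ ≤ d) ∧
        r = ‖∫ z, F z ∂μ‖} =
      sSup {r : ℝ | ∃ μ : Measure ℂ, IsProbabilityMeasure μ ∧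
        (∫ z, z ∂μ) = 0 ∧ (∀ᵐ p ∂(μ.prod μ), ‖p.1 - p.2‖ ≤ d) ∧
        (∃ s : Finset ℂ, s.card ≤ 3 ∧ μ (↑s : Set ℂ)ᶜ = 0) ∧
        r = ‖∫ z, F z ∂μ‖} :=
  sup_three_point_general d F hF
end

section
/- Any complex random variable Z ∈ 𝒵_d with finite support can be written as a finite mixture of random variables in 𝒵_d^{(3)}; i.e., there exist Z_1,…,Z_n ∈ 𝒵_d each supported on at most 3 points and nonnegative weights c_1,…,c_n summing to 1 such that P(Z ∈ A) = Σ_k c_k P(Z_k ∈ A) for all measurable A ⊆ ℂ. -/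
/-!
Identify `μ` with its weight function `p` on the finite support: a probability vector whose
barycenter is `0`. By Carathéodory, `0` is a convex combination of at most `dim + 1 = 3` points of
the support, i.e. of a centered probability weight `q` supported there. Subtracting the largest
multiple `r • q` with `r • q ≤ p` kills a point of the support, and renormalising gives a centered
weight `p'` with smaller support and `p = r • q + (1 - r) • p'`. By induction on the size of the
support, `p` is a convex combination of centered weights carried by at most three points of the
support of `μ`; the corresponding measures inherit the diameter bound from `μ`.
-/

open MeasureTheory Finsupp Module Finset

namespace Finsupp

variable {α : Type*}

theorem eq_zero_of_nonneg_of_sum_eq_zero {f : α →₀ ℝ} (hf : 0 ≤ f)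
    (h : ∑ z ∈ f.support, f z = 0) : f = 0 := by
  ext z
  by_contra hz
  exact hz ((Finset.sum_eq_zero_iff_of_nonneg fun y _ => hf y).1 h z (mem_support_iff.2 hz))

theorem exists_smul_le_of_nonneg {p q : α →₀ ℝ} (hp : 0 ≤ p) (hq : 0 ≤ q) (hq0 : q ≠ 0) :
    ∃ r : ℝ, 0 ≤ r ∧ r • q ≤ p ∧ ∃ z ∈ q.support, r * q z = p z := by
  obtain ⟨z₀, hz₀, hmin⟩ :=
    Finset.exists_min_image q.support (fun z => p z / q z) (support_nonempty_iff.2 hq0)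
  have hpos : ∀ z ∈ q.support, 0 < q z := fun z hz => (hq z).lt_of_ne' (mem_support_iff.1 hz)
  refine ⟨p z₀ / q z₀, div_nonneg (hp z₀) (hq z₀), fun z => ?_, z₀, hz₀,
    div_mul_cancel₀ _ (hpos z₀ hz₀).ne'⟩
  by_cases hz : z ∈ q.support
  · exact (le_div_iff₀ (hpos z hz)).1 (hmin z hz)
  · simpa [notMem_support_iff.1 hz] using hp z

theorem linearCombination_nonneg {p : α →₀ ℝ} {v : α → ℝ} (hp : 0 ≤ p) (hv : 0 ≤ v) :
    0 ≤ linearCombination ℝ v p :=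
  sum_nonneg' fun z => smul_nonneg (hp z) (hv z)

end Finsupp

theorem exists_fin_of_mem_convexHull {V : Type*} [AddCommGroup V] [Module ℝ V] {s : Set V}
    {x : V} (hx : x ∈ convexHull ℝ s) :
    ∃ (n : ℕ) (w : Fin n → ℝ) (z : Fin n → V), (∀ i, 0 ≤ w i) ∧ ∑ i, w i = 1 ∧
      (∀ i, z i ∈ s) ∧ ∑ i, w i • z i = x := by
  obtain ⟨ι, _, w, z, hw0, hw1, hz, hx⟩ := mem_convexHull_iff_exists_fintype.1 hx
  let e := Fintype.equivFin ι
  exact ⟨_, w ∘ e.symm, z ∘ e.symm, fun i => hw0 _, by simpa [e.symm.sum_comp] using hw1,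
    fun i => hz _, by simpa [e.symm.sum_comp fun i => w i • z i] using hx⟩

section CenteredWeights

variable {E : Type*} [AddCommGroup E] [Module ℝ E]

noncomputable def moments : (E →₀ ℝ) →ₗ[ℝ] ℝ × E := linearCombination ℝ fun z => (1, z)

theorem moments_apply (p : E →₀ ℝ) :
    moments p = (∑ z ∈ p.support, p z, ∑ z ∈ p.support, p z • z) := by
  simp [moments, linearCombination_apply, Finsupp.sum, Prod.ext_iff, Prod.fst_sum, Prod.snd_sum]

def IsCenteredProb (p : E →₀ ℝ) : Prop := 0 ≤ p ∧ moments p = (1, 0)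

theorem isCenteredProb_iff {p : E →₀ ℝ} : IsCenteredProb p ↔
    0 ≤ p ∧ ∑ z ∈ p.support, p z = 1 ∧ ∑ z ∈ p.support, p z • z = 0 := by
  rw [IsCenteredProb, moments_apply, Prod.mk.injEq]

variable {p q : E →₀ ℝ}

theorem IsCenteredProb.exists_eq_smul_add_smul (hp : IsCenteredProb p) (hq : IsCenteredProb q)
    (hqp : q.support ⊆ p.support) (hne : q ≠ p) :
    ∃ r ∈ Set.Ico (0 : ℝ) 1, ∃ p', IsCenteredProb p' ∧ p'.support ⊂ p.support ∧
      p = r • q + (1 - r) • p' := by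
  classical
  have hq0 : q ≠ 0 := by rintro rfl; simpa using congrArg Prod.fst hq.2
  obtain ⟨r, hr0, hrq, z₀, hz₀, hrz₀⟩ := exists_smul_le_of_nonneg hp.1 hq.1 hq0
  have hr1 : r < 1 := by
    by_contra! hr
    have hqp_le : q ≤ p := fun z => (le_mul_of_one_le_left (hq.1 z) hr).trans (hrq z)
    have hmass : ∑ z ∈ (p - q).support, (p - q) z = 0 := by
      have := congrArg Prod.fst (map_sub moments p q)
      rwa [hp.2, hq.2, sub_self, moments_apply] at this
    exact hne (sub_eq_zero.1 (eq_zero_of_nonneg_of_sum_eq_zero (sub_nonneg.2 hqp_le) hmass)).symm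
  have h1r : 1 - r ≠ 0 := (sub_pos.2 hr1).ne'
  refine ⟨r, ⟨hr0, hr1⟩, (1 - r)⁻¹ • (p - r • q), ⟨?_, ?_⟩, ?_, ?_⟩
  · exact smul_nonneg (inv_nonneg.2 (sub_pos.2 hr1).le) (sub_nonneg.2 hrq)
  · rw [map_smul, map_sub, map_smul, hp.2, hq.2]
    nth_rw 1 [← one_smul ℝ ((1 : ℝ), (0 : E))]
    rw [← sub_smul, inv_smul_smul₀ h1r]
  · refine (Finset.ssubset_iff_of_subset ?_).2 ⟨z₀, hqp hz₀, by simp [hrz₀]⟩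
    exact support_smul.trans (support_sub.trans (union_subset subset_rfl (support_smul.trans hqp)))
  · rw [smul_inv_smul₀ h1r, add_sub_cancel]

variable [FiniteDimensional ℝ E]

theorem IsCenteredProb.exists_support_subset_card_le (hp : IsCenteredProb p) :
    ∃ q, IsCenteredProb q ∧ q.support ⊆ p.support ∧ #q.support ≤ finrank ℝ E + 1 := by
  obtain ⟨hp0, hmass, hmean⟩ := isCenteredProb_iff.1 hp
  have h0 : (0 : E) ∈ convexHull ℝ (p.support : Set E) :=
    Finset.mem_convexHull'.2 ⟨p, fun z _ => hp0 z, hmass, hmean⟩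
  rw [convexHull_eq_union] at h0
  simp only [Set.mem_iUnion] at h0
  obtain ⟨t, htp, ht_indep, h0t⟩ := h0
  obtain ⟨w, hw0, hw1, hw⟩ := Finset.mem_convexHull'.1 h0t
  let q := onFinset t ((t : Set E).indicator w) fun z hz => Set.mem_of_indicator_ne_zero hz
  have hqt : q.support ⊆ t := support_onFinset_subset
  refine ⟨q, ⟨fun z => Set.indicator_nonneg hw0 z, ?_⟩,
    hqt.trans (Finset.coe_subset.1 htp), (card_le_card hqt).trans ?_⟩
  · rw [moments, linearCombination_onFinset, Finset.sum_congr rfl fun z hz => by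
      rw [Set.indicator_of_mem (Finset.mem_coe.2 hz)]]
    simp [Prod.ext_iff, Prod.fst_sum, Prod.snd_sum, hw1, hw]
  · simpa using
      ht_indep.card_le_finrank_succ.trans (Nat.add_le_add_right (Submodule.finrank_le _) 1)

theorem IsCenteredProb.mem_convexHull {T : Finset E} (hp : IsCenteredProb p)
    (hpT : p.support ⊆ T) :
    p ∈ convexHull ℝ {q | IsCenteredProb q ∧ q.support ⊆ T ∧ #q.support ≤ finrank ℝ E + 1} := by
  induction hn : #p.support using Nat.strong_induction_on generalizing p with
  | _ n ih =>
  by_cases hcard : #p.support ≤ finrank ℝ E + 1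
  · exact subset_convexHull ℝ _ ⟨hp, hpT, hcard⟩
  obtain ⟨q, hq, hqp, hqcard⟩ := hp.exists_support_subset_card_le
  obtain ⟨r, ⟨hr0, hr1⟩, p', hp', hp'p, rfl⟩ :=
    hp.exists_eq_smul_add_smul hq hqp (by rintro rfl; exact hcard hqcard)
  refine convex_convexHull ℝ _ (subset_convexHull ℝ _ ?_)
    (ih _ (hn ▸ card_lt_card hp'p) hp' (hp'p.subset.trans hpT) rfl) hr0 (sub_nonneg.2 hr1.le)
    (add_sub_cancel r 1)
  exact ⟨hq, hqp.trans hpT, hqcard⟩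

end CenteredWeights

namespace Finsupp

variable {α : Type*} [MeasurableSpace α]

/-- Negative weights are read as `0` by `ENNReal.ofReal`. -/
noncomputable def toMeasure (p : α →₀ ℝ) : Measure α :=
  ∑ z ∈ p.support, ENNReal.ofReal (p z) • Measure.dirac z

theorem toMeasure_eq_sum_of_support_subset {p : α →₀ ℝ} {s : Finset α} (h : p.support ⊆ s) :
    p.toMeasure = ∑ z ∈ s, ENNReal.ofReal (p z) • Measure.dirac z :=
  Finset.sum_subset h fun z _ hz => by simp [notMem_support_iff.1 hz]

variable [MeasurableSingletonClass α]

theorem toMeasure_apply {p : α →₀ ℝ} (hp : 0 ≤ p) (A : Set α) :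
    p.toMeasure A = ENNReal.ofReal (linearCombination ℝ (A.indicator 1) p) := by
  have hind : 0 ≤ A.indicator (1 : α → ℝ) := Set.indicator_nonneg fun _ _ => zero_le_one
  rw [linearCombination_apply, Finsupp.sum,
    ENNReal.ofReal_sum_of_nonneg fun z _ => smul_nonneg (hp z) (hind z), toMeasure,
    Measure.coe_finsetSum, Finset.sum_apply]
  refine Finset.sum_congr rfl fun z _ => ?_
  by_cases hz : z ∈ A <;> simp [Measure.dirac_apply, hz]

theorem toMeasure_singleton (p : α →₀ ℝ) (a : α) : p.toMeasure {a} = ENNReal.ofReal (p a) := by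
  rw [toMeasure, Measure.coe_finsetSum, Finset.sum_apply, Finset.sum_eq_single a]
  · simp
  · exact fun b _ hb => by simp [hb]
  · exact fun ha => by simp [notMem_support_iff.1 ha]

theorem toMeasure_compl_support (p : α →₀ ℝ) : p.toMeasure (p.support : Set α)ᶜ = 0 := by
  rw [toMeasure, Measure.coe_finsetSum, Finset.sum_apply]
  exact Finset.sum_eq_zero fun z hz => by simp [Measure.dirac_apply, hz]

theorem toMeasure_sum_smul {ι : Type*} (t : Finset ι) {c : ι → ℝ} {q : ι → α →₀ ℝ}
    (hc : ∀ k, 0 ≤ c k) (hq : ∀ k, 0 ≤ q k) :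
    (∑ k ∈ t, c k • q k).toMeasure = ∑ k ∈ t, ENNReal.ofReal (c k) • (q k).toMeasure := by
  ext A -
  have hind : 0 ≤ A.indicator (1 : α → ℝ) := Set.indicator_nonneg fun _ _ => zero_le_one
  have hsum : 0 ≤ ∑ k ∈ t, c k • q k := Finset.sum_nonneg fun k _ => smul_nonneg (hc k) (hq k)
  rw [toMeasure_apply hsum, map_sum, Measure.coe_finsetSum, Finset.sum_apply,
    ENNReal.ofReal_sum_of_nonneg fun k _ => ?_]
  · refine Finset.sum_congr rfl fun k _ => ?_
    rw [map_smul, smul_eq_mul, ENNReal.ofReal_mul (hc k), Measure.smul_apply, smul_eq_mul,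
      toMeasure_apply (hq k)]
  · rw [map_smul]
    exact smul_nonneg (hc k) (linearCombination_nonneg (hq k) hind)

theorem isProbabilityMeasure_toMeasure_iff {p : α →₀ ℝ} (hp : 0 ≤ p) :
    IsProbabilityMeasure p.toMeasure ↔ ∑ z ∈ p.support, p z = 1 := by
  rw [isProbabilityMeasure_iff, toMeasure_apply hp, Set.indicator_univ, ENNReal.ofReal_eq_one,
    linearCombination_apply]
  simp [Finsupp.sum]

theorem ae_toMeasure_prod {p : α →₀ ℝ} {P : α × α → Prop}
    (h : ∀ a ∈ p.support, ∀ b ∈ p.support, P (a, b)) :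
    ∀ᵐ x ∂(p.toMeasure.prod p.toMeasure), P x := by
  have hmem : ∀ᵐ z ∂p.toMeasure, z ∈ p.support := mem_ae_iff.2 (toMeasure_compl_support p)
  filter_upwards [Measure.quasiMeasurePreserving_fst.ae hmem,
    Measure.quasiMeasurePreserving_snd.ae hmem] with x ha hb
  exact h _ ha _ hb

theorem integral_id_toMeasure {E : Type*} [NormedAddCommGroup E] [NormedSpace ℝ E]
    [CompleteSpace E] [MeasurableSpace E] [MeasurableSingletonClass E] {p : E →₀ ℝ}
    (hp : 0 ≤ p) : ∫ z, z ∂p.toMeasure = ∑ z ∈ p.support, p z • z := by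
  rw [toMeasure, integral_finsetSum_measure fun z _ =>
    (integrable_dirac (by simp)).smul_measure ENNReal.ofReal_ne_top]
  refine Finset.sum_congr rfl fun z _ => ?_
  rw [integral_smul_measure, integral_dirac, ENNReal.toReal_ofReal (hp z)]

end Finsupp

theorem isCenteredProb_iff_toMeasure {E : Type*} [NormedAddCommGroup E] [NormedSpace ℝ E]
    [CompleteSpace E] [MeasurableSpace E] [MeasurableSingletonClass E] {p : E →₀ ℝ} :
    IsCenteredProb p ↔ 0 ≤ p ∧ IsProbabilityMeasure p.toMeasure ∧ ∫ z, z ∂p.toMeasure = 0 := by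
  rw [isCenteredProb_iff]
  refine and_congr_right fun hp => ?_
  rw [isProbabilityMeasure_toMeasure_iff hp, integral_id_toMeasure hp]

namespace MeasureTheory

variable {α : Type*} [MeasurableSpace α] {μ : Measure α}

theorem of_ae_of_measure_singleton_ne_zero {P : α → Prop} (h : ∀ᵐ x ∂μ, P x) {a : α}
    (ha : μ {a} ≠ 0) : P a := by
  by_contra hPa
  exact ha (measure_mono_null (Set.singleton_subset_iff.2 hPa) (ae_iff.1 h))

theorem Measure.exists_eq_toMeasure [MeasurableSingletonClass α] [IsFiniteMeasure μ]
    {s : Finset α} (hs : μ (s : Set α)ᶜ = 0) : ∃ p : α →₀ ℝ, 0 ≤ p ∧ μ = p.toMeasure := by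
  classical
  have hzero : ∀ z ∉ s, μ {z} = 0 := fun z hz =>
    measure_mono_null (Set.singleton_subset_iff.2 hz) hs
  refine ⟨onFinset s (fun z => μ.real {z}) fun z hz => ?_, fun z => measureReal_nonneg, ?_⟩
  · by_contra h
    exact hz (by simp [Measure.real, hzero z h])
  rw [toMeasure_eq_sum_of_support_subset support_onFinset_subset]
  ext A hA
  simp only [Measure.coe_finsetSum, Finset.sum_apply, Measure.smul_apply, onFinset_apply,
    Measure.dirac_apply' _ hA, smul_eq_mul, Set.indicator_apply, Pi.one_apply, mul_ite, mul_one,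
    mul_zero, ofReal_measureReal (measure_ne_top μ _)]
  calc μ A = μ (A ∩ s) := (measure_inter_conull hs).symm
    _ = μ ↑(s.filter (· ∈ A)) := by congr 1; ext; simp [and_comm]
    _ = _ := by rw [← sum_measure_singleton, Finset.sum_filter]

end MeasureTheory

theorem finite_support_mixture_general (d : ℝ) (μ : Measure ℂ)
    [IsProbabilityMeasure μ] (hmean : (∫ z, z ∂μ) = 0)
    (hdiam : ∀ᵐ p ∂(μ.prod μ), ‖p.1 - p.2‖ ≤ d)
    (hfin : ∃ s : Finset ℂ, μ (↑s : Set ℂ)ᶜ = 0) :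
    ∃ (n : ℕ) (c : Fin n → ℝ) (ν : Fin n → Measure ℂ),
      (∀ k, 0 ≤ c k) ∧ (∑ k, c k) = 1 ∧
      (∀ k, IsProbabilityMeasure (ν k)) ∧
      (∀ k, (∫ z, z ∂(ν k)) = 0) ∧
      (∀ k, ∀ᵐ p ∂((ν k).prod (ν k)), ‖p.1 - p.2‖ ≤ d) ∧
      (∀ k, ∃ s : Finset ℂ, s.card ≤ 3 ∧ (ν k) (↑s : Set ℂ)ᶜ = 0) ∧
      (∀ A : Set ℂ, MeasurableSet A → μ A = ∑ k, ENNReal.ofReal (c k) * ν k A) := by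
  obtain ⟨s, hs⟩ := hfin
  obtain ⟨p, hp0, rfl⟩ := Measure.exists_eq_toMeasure hs
  have hp : IsCenteredProb p := isCenteredProb_iff_toMeasure.2 ⟨hp0, ‹_›, hmean⟩
  have hatom : ∀ a ∈ p.support, p.toMeasure {a} ≠ 0 := fun a ha => by
    rw [toMeasure_singleton, ENNReal.ofReal_ne_zero_iff]
    exact (hp0 a).lt_of_ne' (mem_support_iff.1 ha)
  have hdist : ∀ a ∈ p.support, ∀ b ∈ p.support, ‖a - b‖ ≤ d := fun a ha b hb =>
    of_ae_of_measure_singleton_ne_zero (a := (a, b)) hdiam <| by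
      rw [← Set.singleton_prod_singleton, Measure.prod_prod]
      exact mul_ne_zero (hatom a ha) (hatom b hb)
  obtain ⟨n, c, q, hc0, hc1, hq, hpq⟩ :=
    exists_fin_of_mem_convexHull (hp.mem_convexHull subset_rfl)
  have hqμ k := isCenteredProb_iff_toMeasure.1 (hq k).1
  refine ⟨n, c, fun k => (q k).toMeasure, hc0, hc1, fun k => (hqμ k).2.1, fun k => (hqμ k).2.2,
    fun k => ae_toMeasure_prod fun a ha b hb => hdist a ((hq k).2.1 ha) b ((hq k).2.1 hb),
    fun k => ⟨(q k).support, by simpa using (hq k).2.2, toMeasure_compl_support _⟩,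
    fun A _ => ?_⟩
  rw [← hpq, toMeasure_sum_smul univ hc0 fun k => (hqμ k).1]
  simp [Measure.coe_finsetSum]

theorem finite_support_mixture (d : ℝ) (hd : 0 ≤ d) (μ : Measure ℂ)
    [IsProbabilityMeasure μ] (hmean : (∫ z, z ∂μ) = 0)
    (hdiam : ∀ᵐ p ∂(μ.prod μ), ‖p.1 - p.2‖ ≤ d)
    (hfin : ∃ s : Finset ℂ, μ (↑s : Set ℂ)ᶜ = 0) :
    ∃ (n : ℕ) (c : Fin n → ℝ) (ν : Fin n → Measure ℂ),
      (∀ k, 0 ≤ c k) ∧ (∑ k, c k) = 1 ∧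
      (∀ k, IsProbabilityMeasure (ν k)) ∧
      (∀ k, (∫ z, z ∂(ν k)) = 0) ∧
      (∀ k, ∀ᵐ p ∂((ν k).prod (ν k)), ‖p.1 - p.2‖ ≤ d) ∧
      (∀ k, ∃ s : Finset ℂ, s.card ≤ 3 ∧ (ν k) (↑s : Set ℂ)ᶜ = 0) ∧
      (∀ A : Set ℂ, MeasurableSet A → μ A = ∑ k, ENNReal.ofReal (c k) * ν k A) :=
  finite_support_mixture_general d μ hmean hdiam hfin
end

section
/- For t ≥ 3, G(t) + 1 ≤ 0.9·e^{t²/8}, where G(d) = [exp(-(e^d-1-d)/(e^d-1)) - 2·exp((d e^d - e^d + 1)/(e^d-1)) + exp((2d e^d - e^d - d + 1)/(e^d-1))]/(d(e^d-1)) - 1. -/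
/-! With s(t) = (eᵗ - 1)/t, the slope of the secant of `exp` through `0`, one has
G(t) + 1 = s(t) · exp (1/s(t) - 1). Convexity of `exp` makes `s` increasing, so the second
factor is largest at `t = 3`; and s(t) · e^{-t²/8} is decreasing on [3, ∞), since there
eᵗ (t - 2)² ≥ t² + 4. Both factors are thus reduced to `t = 3`, where the bound is the numerical
inequality (e³ - 1)/3 · exp (3/(e³ - 1) - 17/8) ≈ 0.889 ≤ 0.9. -/

noncomputable def G (d : ℝ) : ℝ :=
  (Real.exp (-(Real.exp d - 1 - d) / (Real.exp d - 1))
    - 2 * Real.exp ((d * Real.exp d - Real.exp d + 1) / (Real.exp d - 1))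
    + Real.exp ((2 * d * Real.exp d - Real.exp d - d + 1) / (Real.exp d - 1)))
    / (d * (Real.exp d - 1)) - 1

open Real Set

theorem G_add_one (t : ℝ) :
    G t + 1 = (exp t - 1) / t * exp (t / (exp t - 1) - 1) := by
  rcases eq_or_ne t 0 with rfl | ht
  · simp [G]
  have hE : exp t - 1 ≠ 0 := by simpa [sub_eq_zero] using ht
  have e1 : -(exp t - 1 - t) / (exp t - 1) = t / (exp t - 1) - 1 := by
    field_simp; ring
  have e2 : (t * exp t - exp t + 1) / (exp t - 1) = t + (t / (exp t - 1) - 1) := by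
    field_simp; ring
  have e3 : (2 * t * exp t - exp t - t + 1) / (exp t - 1)
      = t + (t + (t / (exp t - 1) - 1)) := by
    field_simp; ring
  rw [G, e1, e2, e3, exp_add, exp_add, exp_add]
  field_simp
  ring

theorem monotoneOn_exp_sub_one_div : MonotoneOn (fun t => (exp t - 1) / t) {0}ᶜ :=
  fun x hx y hy hxy => by
    simpa using convexOn_exp.secant_mono (mem_univ 0) (mem_univ x) (mem_univ y) hx hy hxy

theorem hasDerivAt_exp_sub_one_div_mul_exp {t : ℝ} (ht : t ≠ 0) :
    HasDerivAt (fun t => (exp t - 1) / t * exp (-(t ^ 2 / 8)))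
      (-(exp (-(t ^ 2 / 8)) * (exp t * (t - 2) ^ 2 - (t ^ 2 + 4)) / (4 * t ^ 2))) t := by
  have hnum : HasDerivAt (fun t => exp t - 1) (exp t) t := (hasDerivAt_exp t).sub_const 1
  have hgauss : HasDerivAt (fun t => exp (-(t ^ 2 / 8))) (exp (-(t ^ 2 / 8)) * -(t / 4)) t := by
    convert (((hasDerivAt_pow 2 t).div_const 8).fun_neg).exp using 1
    push_cast
    ring
  refine ((hnum.fun_div (hasDerivAt_id' t) ht).fun_mul hgauss).congr_deriv ?_
  field_simp
  ring

theorem exp_three_gt : 19.75 < exp 3 := by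
  rw [show (3 : ℝ) = (3 : ℕ) * 1 by norm_num, exp_nat_mul]
  calc (19.75 : ℝ) < 2.7182818283 ^ 3 := by norm_num
    _ < exp 1 ^ 3 := by gcongr; exact exp_one_gt_d9

theorem exp_three_lt : exp 3 < 20.1 := by
  rw [show (3 : ℝ) = (3 : ℕ) * 1 by norm_num, exp_nat_mul]
  calc exp 1 ^ 3 < 2.7182818286 ^ 3 := by gcongr; exact exp_one_lt_d9
    _ < 20.1 := by norm_num

theorem antitoneOn_exp_sub_one_div_mul_exp :
    AntitoneOn (fun t => (exp t - 1) / t * exp (-(t ^ 2 / 8))) (Ici 3) := by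
  have hderiv (t : ℝ) (ht : t ∈ Ici (3 : ℝ)) :=
    hasDerivAt_exp_sub_one_div_mul_exp (by linarith [mem_Ici.mp ht] : t ≠ 0)
  refine antitoneOn_of_hasDerivWithinAt_nonpos (convex_Ici 3)
    (fun t ht => (hderiv t ht).continuousAt.continuousWithinAt)
    (fun t ht => (hderiv t (interior_subset ht)).hasDerivWithinAt) fun t ht => ?_
  rw [interior_Ici, mem_Ioi] at ht
  have hexp : 19 ≤ exp t := by linarith [exp_three_gt, exp_le_exp.2 ht.le]
  have hsign : t ^ 2 + 4 ≤ exp t * (t - 2) ^ 2 := by nlinarith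
  exact neg_nonpos.2 <| div_nonneg (mul_nonneg (exp_pos _).le (sub_nonneg.2 hsign)) (by positivity)

theorem exp_three_sub_one_div_mul_exp_le :
    (exp 3 - 1) / 3 * exp (3 / (exp 3 - 1) - 17 / 8) ≤ 0.9 := by
  have h3lo := exp_three_gt
  have h3hi := exp_three_lt
  have hexponent : 3 / (exp 3 - 1) - 17 / 8 ≤ -(393 / 200) := by
    have : 3 / (exp 3 - 1) ≤ 4 / 25 := by
      rw [div_le_iff₀ (by linarith)]
      linarith
    linarith
  have hexp : 7.13 ≤ exp (393 / 200) :=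
    le_trans (by norm_num [Finset.sum_range_succ, Nat.factorial])
      (sum_le_exp_of_nonneg (x := 393 / 200) (by norm_num) 9)
  calc (exp 3 - 1) / 3 * exp (3 / (exp 3 - 1) - 17 / 8)
      ≤ (exp 3 - 1) / 3 * exp (-(393 / 200)) := by gcongr; linarith
    _ = (exp 3 - 1) / 3 / exp (393 / 200) := by rw [exp_neg, ← div_eq_mul_inv]
    _ ≤ 0.9 := by rw [div_le_iff₀ (exp_pos _)]; linarith

theorem G_bound_one (t : ℝ) (ht : 3 ≤ t) : G t + 1 ≤ 0.9 * Real.exp (t ^ 2 / 8) := by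
  have ht0 : t ≠ 0 := by positivity
  have hslope : (exp 3 - 1) / 3 ≤ (exp t - 1) / t :=
    monotoneOn_exp_sub_one_div (by norm_num) ht0 ht
  have hdecay : (exp t - 1) / t * exp (-(t ^ 2 / 8)) ≤ (exp 3 - 1) / 3 * exp (-(3 ^ 2 / 8)) :=
    antitoneOn_exp_sub_one_div_mul_exp self_mem_Ici ht ht
  have hslope_pos : 0 < (exp 3 - 1) / 3 :=
    div_pos (sub_pos.2 (one_lt_exp_iff.2 three_pos)) three_pos
  have hexponent : t / (exp t - 1) ≤ 3 / (exp 3 - 1) := by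
    rw [← inv_div, ← inv_div (exp 3 - 1)]
    exact inv_anti₀ hslope_pos hslope
  rw [G_add_one]
  calc (exp t - 1) / t * exp (t / (exp t - 1) - 1)
      ≤ (exp t - 1) / t * exp (3 / (exp 3 - 1) - 1) := by gcongr; linarith
    _ = (exp t - 1) / t * exp (-(t ^ 2 / 8)) * exp (3 / (exp 3 - 1) - 1) * exp (t ^ 2 / 8) := by
        rw [exp_neg]; field_simp
    _ ≤ (exp 3 - 1) / 3 * exp (-(3 ^ 2 / 8)) * exp (3 / (exp 3 - 1) - 1) * exp (t ^ 2 / 8) := by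
        gcongr
    _ = (exp 3 - 1) / 3 * exp (3 / (exp 3 - 1) - 17 / 8) * exp (t ^ 2 / 8) := by
        rw [mul_assoc ((exp 3 - 1) / 3), ← exp_add]; ring_nf
    _ ≤ 0.9 * exp (t ^ 2 / 8) := by gcongr; exact exp_three_sub_one_div_mul_exp_le
end

section
/- Every subset of the plane ℝ² with diameter at most d is contained in a closed disk of radius d/√3 (Jung's theorem in dimension 2). -/
/-!
Among all probability weights `w` on finitely many points `xᵢ`, pick one maximising the inertia
`I = ∑ wᵢ ‖xᵢ - c‖²` about the barycenter `c = ∑ wᵢ xᵢ`. Moving `w` a distance `t` towards the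
vertex `j` turns `I` into `(1 - t) I + t (1 - t) ‖xⱼ - c‖²`, so maximality forces `‖xⱼ - c‖² ≤ I`
for every `j`. On the other hand `2 I = ∑ wᵢ wⱼ ‖xᵢ - xⱼ‖² ≤ d² (1 - ∑ wᵢ²) ≤ d² (1 - 1/k)` for
`k` points of diameter at most `d`, which is `2 d² / 3` when `k ≤ 3`. Helly's theorem in the plane
reduces an arbitrary set to three of its points.
-/

open Metric Finset

namespace Jung

variable {E ι : Type*} [NormedAddCommGroup E] [InnerProductSpace ℝ E] [Fintype ι]

def barycenter (w : ι → ℝ) (x : ι → E) : E := ∑ i, w i • x i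

def inertia (w : ι → ℝ) (x : ι → E) : ℝ := ∑ i, w i * ‖x i - barycenter w x‖ ^ 2

variable {w : ι → ℝ} {x : ι → E}

theorem sum_mul_norm_sub_sq_eq_inertia_add (hw : ∑ i, w i = 1) (p : E) :
    ∑ i, w i * ‖x i - p‖ ^ 2 = inertia w x + ‖barycenter w x - p‖ ^ 2 := by
  set c := barycenter w x
  have hc : ∑ i, w i • (x i - c) = 0 := by
    simp only [smul_sub, sum_sub_distrib, ← sum_smul, hw, one_smul, c, barycenter, sub_self]
  have hsplit (i : ι) :
      ‖x i - p‖ ^ 2 = ‖x i - c‖ ^ 2 + 2 * inner ℝ (x i - c) (c - p) + ‖c - p‖ ^ 2 := by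
    rw [← norm_add_sq_real, sub_add_sub_cancel]
  have hinner : ∑ i, w i * (2 * inner ℝ (x i - c) (c - p)) = 0 := by
    have h₀ : ∑ i, w i * inner ℝ (x i - c) (c - p) = 0 := by
      simp only [← real_inner_smul_left, ← sum_inner, hc, inner_zero_left]
    simp only [mul_left_comm _ (2 : ℝ), ← mul_sum, h₀, mul_zero]
  simp only [hsplit, mul_add, sum_add_distrib, ← sum_mul, hw, hinner, inertia]
  ring

theorem two_mul_inertia_eq_sum_sum (hw : ∑ i, w i = 1) :
    2 * inertia w x = ∑ i, ∑ j, w i * w j * ‖x i - x j‖ ^ 2 := by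
  have hrow (j : ι) :
      ∑ i, w i * w j * ‖x i - x j‖ ^ 2 = w j * (inertia w x + ‖x j - barycenter w x‖ ^ 2) := by
    rw [norm_sub_rev (x j), ← sum_mul_norm_sub_sq_eq_inertia_add hw, mul_sum]
    exact sum_congr rfl fun i _ => by ring
  rw [sum_comm]
  simp only [hrow, mul_add, sum_add_distrib, ← sum_mul, hw, one_mul]
  rw [inertia]
  ring

theorem inertia_le_of_dist_le (hw : w ∈ stdSimplex ℝ ι) {d : ℝ}
    (hx : ∀ i j, dist (x i) (x j) ≤ d) :
    inertia w x ≤ (1 - (Fintype.card ι : ℝ)⁻¹) / 2 * d ^ 2 := by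
  classical
  obtain ⟨hw₀, hw₁⟩ := hw
  have hpair (i j : ι) :
      w i * w j * ‖x i - x j‖ ^ 2 ≤ w i * w j * (d ^ 2 - if i = j then d ^ 2 else 0) := by
    refine mul_le_mul_of_nonneg_left ?_ (mul_nonneg (hw₀ i) (hw₀ j))
    split_ifs with hij
    · simp [hij]
    · simpa [← dist_eq_norm] using pow_le_pow_left₀ dist_nonneg (hx i j) 2
  have hsum : ∑ i, ∑ j, w i * w j * (d ^ 2 - if i = j then d ^ 2 else 0)
      = d ^ 2 * (1 - ∑ i, w i ^ 2) := by
    simp only [mul_sub, sum_sub_distrib, mul_ite, mul_zero, sum_ite_eq, mem_univ, if_true,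
      ← sum_mul, ← mul_sum, hw₁]
    ring_nf
  have hcard : 1 ≤ (Fintype.card ι : ℝ) * ∑ i, w i ^ 2 := by
    simpa [hw₁] using sq_sum_le_card_mul_sum_sq (s := univ) (f := w)
  have hpos : (0 : ℝ) < Fintype.card ι :=
    pos_of_mul_pos_left (one_pos.trans_le hcard) (sum_nonneg fun i _ => sq_nonneg (w i))
  have hsq : (Fintype.card ι : ℝ)⁻¹ ≤ ∑ i, w i ^ 2 := by
    rwa [inv_le_iff_one_le_mul₀' hpos]
  have h2I := (two_mul_inertia_eq_sum_sum hw₁ (x := x)).trans_le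
    ((sum_le_sum fun i _ => sum_le_sum fun j _ => hpair i j).trans_eq hsum)
  nlinarith [sq_nonneg d]

theorem inertia_combo_single [DecidableEq ι] (hw : ∑ i, w i = 1) (j : ι) (t : ℝ) :
    inertia ((1 - t) • w + t • Pi.single j 1) x
      = (1 - t) * inertia w x + t * (1 - t) * ‖x j - barycenter w x‖ ^ 2 := by
  set w' := (1 - t) • w + t • Pi.single j (1 : ℝ)
  have hw' : ∑ i, w' i = 1 := by
    simp [w', sum_add_distrib, ← mul_sum, hw]
  have hbary : barycenter w' x - barycenter w x = t • (x j - barycenter w x) := by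
    simp only [barycenter, w', Pi.add_apply, Pi.smul_apply, smul_eq_mul, add_smul, mul_smul,
      sum_add_distrib, ← smul_sum, Pi.single_apply, ite_smul, one_smul, zero_smul, sum_ite_eq',
      mem_univ, if_true]
    module
  have h := sum_mul_norm_sub_sq_eq_inertia_add hw' (x := x) (barycenter w x)
  rw [hbary, norm_smul, mul_pow, Real.norm_eq_abs, sq_abs] at h
  have hlhs : ∑ i, w' i * ‖x i - barycenter w x‖ ^ 2
      = (1 - t) * inertia w x + t * ‖x j - barycenter w x‖ ^ 2 := by
    simp [w', add_mul, sum_add_distrib, mul_assoc, ← mul_sum, Pi.single_apply, inertia]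
  linarith

theorem norm_sub_barycenter_sq_le_inertia (hw : w ∈ stdSimplex ℝ ι)
    (hmax : IsMaxOn (inertia · x) (stdSimplex ℝ ι) w) (j : ι) :
    ‖x j - barycenter w x‖ ^ 2 ≤ inertia w x := by
  classical
  set D := ‖x j - barycenter w x‖ ^ 2
  set I := inertia w x
  have hI : 0 ≤ I := sum_nonneg fun i _ => mul_nonneg (hw.1 i) (sq_nonneg _)
  have hmove (t : ℝ) (ht₀ : 0 ≤ t) (ht₁ : t ≤ 1) : (1 - t) * I + t * (1 - t) * D ≤ I := by
    have hmem : (1 - t) • w + t • Pi.single j 1 ∈ stdSimplex ℝ ι :=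
      convex_stdSimplex ℝ ι hw (single_mem_stdSimplex ℝ j) (by linarith) ht₀ (by ring)
    have : inertia _ x ≤ I := hmax hmem
    rwa [inertia_combo_single hw.2] at this
  by_contra! hlt
  have hD : 0 < D := hI.trans_lt hlt
  have hhalf := hmove ((D - I) / (2 * D)) (by positivity)
    (by rw [div_le_one (by positivity)]; linarith)
  field_simp at hhalf
  nlinarith

theorem exists_forall_dist_sq_le [Nonempty ι] (x : ι → E) {d : ℝ}
    (hx : ∀ i j, dist (x i) (x j) ≤ d) :
    ∃ c : E, ∀ i, dist (x i) c ^ 2 ≤ (1 - (Fintype.card ι : ℝ)⁻¹) / 2 * d ^ 2 := by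
  classical
  have hcont : Continuous fun w : ι → ℝ => inertia w x := by
    unfold inertia barycenter
    fun_prop
  obtain ⟨w, hw, hmax⟩ := (isCompact_stdSimplex ℝ ι).exists_isMaxOn
    ⟨_, single_mem_stdSimplex ℝ (Classical.arbitrary ι)⟩ hcont.continuousOn
  refine ⟨barycenter w x, fun i => ?_⟩
  rw [dist_eq_norm]
  exact (norm_sub_barycenter_sq_le_inertia hw hmax i).trans (inertia_le_of_dist_le hw hx)

theorem exists_forall_dist_le_div_sqrt_three (x : ι → E) (hcard : Fintype.card ι ≤ 3) {d : ℝ}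
    (hx : ∀ i j, dist (x i) (x j) ≤ d) : ∃ c : E, ∀ i, dist (x i) c ≤ d / √3 := by
  rcases isEmpty_or_nonempty ι with hι | hι
  · exact ⟨0, isEmptyElim⟩
  have hd : 0 ≤ d := dist_nonneg.trans (hx hι.some hι.some)
  have hk : (3 : ℝ)⁻¹ ≤ (Fintype.card ι : ℝ)⁻¹ :=
    inv_anti₀ (by exact_mod_cast Fintype.card_pos) (by exact_mod_cast hcard)
  obtain ⟨c, hc⟩ := exists_forall_dist_sq_le x hx
  refine ⟨c, fun i => (pow_le_pow_iff_left₀ dist_nonneg (by positivity) two_ne_zero).1 ?_⟩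
  rw [div_pow, Real.sq_sqrt zero_le_three]
  nlinarith [hc i, sq_nonneg d]

end Jung

theorem jung_plane (S : Set (EuclideanSpace ℝ (Fin 2))) (d : ℝ)
    (h : ∀ x ∈ S, ∀ y ∈ S, dist x y ≤ d) :
    ∃ c : EuclideanSpace ℝ (Fin 2), S ⊆ Metric.closedBall c (d / Real.sqrt 3) := by
  obtain ⟨c, hc⟩ : (⋂ x : S, closedBall (x : EuclideanSpace ℝ (Fin 2)) (d / √3)).Nonempty := by
    refine Convex.helly_theorem_compact' (𝕜 := ℝ) (fun _ => convex_closedBall _ _)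
      (fun _ => isCompact_closedBall _ _) fun I hI => ?_
    rw [finrank_euclideanSpace_fin] at hI
    obtain ⟨c, hc⟩ := Jung.exists_forall_dist_le_div_sqrt_three
      (fun i : I => (i.1 : EuclideanSpace ℝ (Fin 2))) (by rwa [Fintype.card_coe])
      fun i j => h _ i.1.2 _ j.1.2
    exact ⟨c, Set.mem_iInter₂.2 fun i hi => mem_closedBall_comm.1 (hc ⟨i, hi⟩)⟩
  exact ⟨c, fun x hx => mem_closedBall_comm.1 (Set.mem_iInter.1 hc ⟨x, hx⟩)⟩
end
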